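/- arXiv:math/0007012 — 6 statements merged into one kernel-verified Lean document; each statement's English description precedes it below -/
import Mathlib

section
/- ∫₀^∞ log|1 - s²| / s² ds = 0. -/
open MeasureTheory Real Set Filter Topology

noncomputable def Faux (x : ℝ) : ℝ :=
  (x - 1) / x * Real.log (x - 1) - (x + 1) / x * Real.log (x + 1)

lemma Faux_zero : Faux 0 = 0 := by
  simp [Faux]

lemma Faux_one : Faux 1 = -(2 * Real.log 2) := by
  norm_num [Faux]

lemma hasDerivAt_Faux {x : ℝ} (hx : 0 < x) (h1 : x ≠ 1) :
    HasDerivAt Faux (Real.log |1 - x ^ 2| / x ^ 2) x := by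
  have hx0 : x ≠ 0 := ne_of_gt hx
  have hm : x - 1 ≠ 0 := sub_ne_zero.mpr h1
  have hp : x + 1 ≠ 0 := by positivity
  have d1 : HasDerivAt (fun y : ℝ => (y - 1) / y) (1 / x ^ 2) x := by
    have := ((hasDerivAt_id x).sub_const 1).div (hasDerivAt_id x) hx0
    convert this using 1
    all_goals try rfl
    all_goals (simp only [id]; field_simp; try ring)
  have d2 : HasDerivAt (fun y : ℝ => Real.log (y - 1)) (1 / (x - 1)) x := by
    simpa using ((hasDerivAt_id x).sub_const 1).log hm
  have d3 : HasDerivAt (fun y : ℝ => (y + 1) / y) (-1 / x ^ 2) x := by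
    have := ((hasDerivAt_id x).add_const 1).div (hasDerivAt_id x) hx0
    convert this using 1
    all_goals try rfl
    all_goals (simp only [id]; field_simp; try ring)
  have d4 : HasDerivAt (fun y : ℝ => Real.log (y + 1)) (1 / (x + 1)) x := by
    simpa using ((hasDerivAt_id x).add_const 1).log hp
  have D := (d1.mul d2).sub (d3.mul d4)
  have hlog : Real.log |1 - x ^ 2| = Real.log (x - 1) + Real.log (x + 1) := by
    rw [← Real.log_abs (x - 1), ← Real.log_abs (x + 1),
      ← Real.log_mul (abs_ne_zero.mpr hm) (abs_ne_zero.mpr hp), ← abs_mul,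
      show (x - 1) * (x + 1) = -(1 - x ^ 2) by ring, abs_neg]
  convert D using 1
  all_goals try rfl
  rw [hlog]
  field_simp
  ring

lemma tendsto_Faux_atTop : Tendsto Faux atTop (𝓝 0) := by
  have hlog : Tendsto (fun x : ℝ => Real.log x / x) atTop (𝓝 0) := by
    simpa using Real.isLittleO_log_id_atTop.tendsto_div_nhds_zero
  have hsub : Tendsto (fun x : ℝ => x - 1) atTop atTop :=
    tendsto_atTop_add_const_right _ (-1) tendsto_id
  have hadd : Tendsto (fun x : ℝ => x + 1) atTop atTop :=
    tendsto_atTop_add_const_right _ 1 tendsto_id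
  have A : Tendsto (fun x : ℝ => Real.log (x - 1) / (x - 1)) atTop (𝓝 0) := hlog.comp hsub
  have B : Tendsto (fun x : ℝ => Real.log (x + 1) / (x + 1)) atTop (𝓝 0) := hlog.comp hadd
  have r1 : Tendsto (fun x : ℝ => (x - 1) / x) atTop (𝓝 1) := by
    have : Tendsto (fun x : ℝ => 1 - x⁻¹) atTop (𝓝 (1 - 0)) :=
      tendsto_const_nhds.sub tendsto_inv_atTop_zero
    rw [sub_zero] at this
    refine this.congr' ?_
    filter_upwards [eventually_gt_atTop (0:ℝ)] with x hx
    field_simp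
  have r2 : Tendsto (fun x : ℝ => (x + 1) / x) atTop (𝓝 1) := by
    have : Tendsto (fun x : ℝ => 1 + x⁻¹) atTop (𝓝 (1 + 0)) :=
      tendsto_const_nhds.add tendsto_inv_atTop_zero
    rw [add_zero] at this
    refine this.congr' ?_
    filter_upwards [eventually_gt_atTop (0:ℝ)] with x hx
    field_simp
  have r3 : Tendsto (fun x : ℝ => (x - 1) / (x + 1)) atTop (𝓝 1) := by
    have hinv : Tendsto (fun x : ℝ => (x + 1)⁻¹) atTop (𝓝 0) := tendsto_inv_atTop_zero.comp hadd
    have h2 : Tendsto (fun x : ℝ => 1 - 2 * (x + 1)⁻¹) atTop (𝓝 (1 - 2 * 0)) :=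
      tendsto_const_nhds.sub (tendsto_const_nhds.mul hinv)
    norm_num at h2
    refine h2.congr' ?_
    filter_upwards [eventually_gt_atTop (0:ℝ)] with x hx
    have h0 : x + 1 ≠ 0 := by positivity
    field_simp
    ring
  have rlog : Tendsto (fun x : ℝ => Real.log ((x - 1) / (x + 1))) atTop (𝓝 0) := by
    have := (Real.continuousAt_log one_ne_zero).tendsto.comp r3
    simpa [Function.comp_def] using this
  have main : Tendsto (fun x : ℝ => Real.log ((x - 1) / (x + 1))
      - Real.log (x - 1) / (x - 1) * ((x - 1) / x)
      - Real.log (x + 1) / (x + 1) * ((x + 1) / x)) atTop (𝓝 (0 - 0 * 1 - 0 * 1)) :=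
    (rlog.sub (A.mul r1)).sub (B.mul r2)
  norm_num at main
  refine main.congr' ?_
  filter_upwards [eventually_gt_atTop (1:ℝ)] with x hx
  have hx0 : x ≠ 0 := by positivity
  have hm : x - 1 ≠ 0 := by nlinarith
  have hp : x + 1 ≠ 0 := by positivity
  rw [Real.log_div hm hp, Faux]
  field_simp
  ring

lemma tendsto_Faux_zero : Tendsto Faux (𝓝[>] (0:ℝ)) (𝓝 0) := by
  have hmono : 𝓝[>] (0:ℝ) ≤ 𝓝[≠] (0:ℝ) :=
    nhdsWithin_mono 0 (fun x hx => ne_of_gt hx)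
  have s1 : Tendsto (fun x : ℝ => Real.log (1 + x) / x) (𝓝[≠] (0:ℝ)) (𝓝 1) := by
    have hd : HasDerivAt (fun x : ℝ => Real.log (1 + x)) 1 0 := by
      simpa using ((hasDerivAt_id (0:ℝ)).const_add 1).log (by norm_num)
    have := hasDerivAt_iff_tendsto_slope.mp hd
    refine this.congr ?_
    intro x
    simp only [slope_def_field, sub_zero, add_zero, Real.log_one]
    try ring
  have s2 : Tendsto (fun x : ℝ => Real.log (1 - x) / x) (𝓝[≠] (0:ℝ)) (𝓝 (-1)) := by
    have hd : HasDerivAt (fun x : ℝ => Real.log (1 - x)) (-1) 0 := by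
      simpa using ((hasDerivAt_id (0:ℝ)).const_sub 1).log (by norm_num)
    have := hasDerivAt_iff_tendsto_slope.mp hd
    refine this.congr ?_
    intro x
    simp only [slope_def_field, sub_zero, sub_zero, Real.log_one]
    try ring
  have hid : Tendsto (fun x : ℝ => x) (𝓝[>] (0:ℝ)) (𝓝 0) := tendsto_id.mono_left nhdsWithin_le_nhds
  have main : Tendsto (fun x : ℝ => (x - 1) * (Real.log (1 - x) / x)
      - (x + 1) * (Real.log (1 + x) / x)) (𝓝[>] (0:ℝ))
      (𝓝 ((0 - 1) * (-1) - (0 + 1) * 1)) :=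
    (((hid.sub_const 1).mul (s2.mono_left hmono)).sub
      ((hid.add_const 1).mul (s1.mono_left hmono)))
  norm_num at main
  refine main.congr (fun x => ?_)
  have h1 : Real.log (x - 1) = Real.log (1 - x) := by
    rw [← Real.log_neg_eq_log]; ring_nf
  have h2 : Real.log (x + 1) = Real.log (1 + x) := by rw [add_comm]
  rw [Faux, h1, h2]
  ring

lemma continuousAt_Faux_one : ContinuousAt Faux 1 := by
  rw [← continuousWithinAt_compl_self]
  have key : Tendsto (fun y : ℝ => Real.log y * y) (𝓝[≠] (0:ℝ)) (𝓝 0) := by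
    rw [← nhdsLT_sup_nhdsGT]
    refine Tendsto.sup tendsto_log_mul_self_nhdsLT_zero ?_
    simpa using tendsto_log_mul_rpow_nhdsGT_zero (r := 1) one_pos
  have hcomp : Tendsto (fun x : ℝ => x - 1) (𝓝[≠] (1:ℝ)) (𝓝[≠] (0:ℝ)) := by
    apply tendsto_nhdsWithin_of_tendsto_nhds_of_eventually_within
    · have : Tendsto (fun x : ℝ => x - 1) (𝓝 (1:ℝ)) (𝓝 (1 - 1)) :=
        (continuous_id.sub continuous_const).tendsto 1
      simpa using this.mono_left nhdsWithin_le_nhds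
    · filter_upwards [self_mem_nhdsWithin] with x hx
      exact sub_ne_zero.mpr hx
  have T1 : Tendsto (fun x : ℝ => Real.log (x - 1) * (x - 1)) (𝓝[≠] (1:ℝ)) (𝓝 0) :=
    key.comp hcomp
  have T2 : Tendsto (fun x : ℝ => x⁻¹) (𝓝[≠] (1:ℝ)) (𝓝 1) := by
    have : Tendsto (fun x : ℝ => x⁻¹) (𝓝 (1:ℝ)) (𝓝 1) := by
      simpa using (continuousAt_inv₀ (x := (1:ℝ)) one_ne_zero).tendsto
    exact this.mono_left nhdsWithin_le_nhds
  have T3 : Tendsto (fun x : ℝ => (x + 1) / x * Real.log (x + 1)) (𝓝[≠] (1:ℝ))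
      (𝓝 (2 * Real.log 2)) := by
    have hc : ContinuousAt (fun x : ℝ => (x + 1) / x * Real.log (x + 1)) 1 := by
      apply ContinuousAt.mul
      · exact (continuousAt_id.add continuousAt_const).div continuousAt_id one_ne_zero
      · exact (Real.continuousAt_log (by norm_num)).comp (continuousAt_id.add continuousAt_const)
    have h' : Tendsto (fun x : ℝ => (x + 1) / x * Real.log (x + 1)) (𝓝[≠] (1:ℝ))
        (𝓝 ((1 + 1) / 1 * Real.log (1 + 1))) := hc.tendsto.mono_left nhdsWithin_le_nhds
    norm_num at h'
    exact h'
  have main : Tendsto (fun x : ℝ => Real.log (x - 1) * (x - 1) * x⁻¹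
      - (x + 1) / x * Real.log (x + 1)) (𝓝[≠] (1:ℝ)) (𝓝 (0 * 1 - 2 * Real.log 2)) :=
    ((T1.mul T2).sub T3)
  norm_num at main
  unfold ContinuousWithinAt
  rw [Faux_one]
  refine main.congr (fun x => ?_)
  rw [Faux]
  ring

lemma sqrt_two_gt_one : (1:ℝ) < Real.sqrt 2 := by
  rw [show (1:ℝ) = Real.sqrt 1 by simp]
  exact Real.sqrt_lt_sqrt (by norm_num) (by norm_num)

lemma continuousOn_Faux_Icc01 : ContinuousOn Faux (Icc (0:ℝ) 1) := by
  intro x hx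
  rcases hx.1.eq_or_lt with rfl | hx0
  · have h : ContinuousWithinAt Faux (Ioi (0:ℝ)) 0 := by
      unfold ContinuousWithinAt
      rw [Faux_zero]
      exact tendsto_Faux_zero
    exact (continuousWithinAt_Ioi_iff_Ici.mp h).mono Icc_subset_Ici_self
  rcases hx.2.eq_or_lt with rfl | hx1
  · exact continuousAt_Faux_one.continuousWithinAt
  · exact ((hasDerivAt_Faux hx0 (ne_of_lt hx1)).continuousAt).continuousWithinAt

lemma continuousOn_Faux_Icc1s : ContinuousOn Faux (Icc (1:ℝ) (Real.sqrt 2)) := by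
  intro x hx
  rcases hx.1.eq_or_lt with rfl | hx1
  · exact continuousAt_Faux_one.continuousWithinAt
  · exact ((hasDerivAt_Faux (lt_trans one_pos hx1) (ne_of_gt hx1)).continuousAt).continuousWithinAt

lemma integrableOn_Ioc01 :
    IntegrableOn (fun s : ℝ => Real.log |1 - s ^ 2| / s ^ 2) (Ioc (0:ℝ) 1) := by
  have h := intervalIntegral.integrableOn_deriv_of_nonneg (a := 0) (b := 1)
    (g := fun x => -Faux x) (g' := fun x => -(Real.log |1 - x ^ 2| / x ^ 2))
    continuousOn_Faux_Icc01.neg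
    (fun x hx => (hasDerivAt_Faux hx.1 (ne_of_lt hx.2)).neg)
    (fun x hx => by
      have h1 : |1 - x ^ 2| = 1 - x ^ 2 := abs_of_pos (by nlinarith [hx.1, hx.2])
      have h2 : Real.log |1 - x ^ 2| ≤ 0 := by
        rw [h1]; exact Real.log_nonpos (by nlinarith [hx.1, hx.2]) (by nlinarith [hx.1])
      have h3 : (0:ℝ) < x ^ 2 := pow_pos hx.1 2
      simpa using div_nonpos_of_nonpos_of_nonneg h2 h3.le)
  exact integrable_neg_iff.mp h

lemma integrableOn_Ioc1s :
    IntegrableOn (fun s : ℝ => Real.log |1 - s ^ 2| / s ^ 2) (Ioc (1:ℝ) (Real.sqrt 2)) := by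
  have h := intervalIntegral.integrableOn_deriv_of_nonneg (a := 1) (b := Real.sqrt 2)
    (g := fun x => -Faux x) (g' := fun x => -(Real.log |1 - x ^ 2| / x ^ 2))
    continuousOn_Faux_Icc1s.neg
    (fun x hx => (hasDerivAt_Faux (lt_trans one_pos hx.1) (ne_of_gt hx.1)).neg)
    (fun x hx => by
      have hx0 : (0:ℝ) ≤ x := le_of_lt (lt_trans one_pos hx.1)
      have hxx : x ^ 2 < 2 := (Real.lt_sqrt hx0).mp hx.2
      have h1 : |1 - x ^ 2| = x ^ 2 - 1 := by
        rw [abs_of_nonpos (by nlinarith [hx.1])]; ring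
      have h2 : Real.log |1 - x ^ 2| ≤ 0 := by
        rw [h1]; exact Real.log_nonpos (by nlinarith [hx.1]) (by nlinarith)
      have h3 : (0:ℝ) < x ^ 2 := pow_pos (lt_trans one_pos hx.1) 2
      simpa using div_nonpos_of_nonpos_of_nonneg h2 h3.le)
  exact integrable_neg_iff.mp h

lemma integrableOn_Ioi_sqrt2 :
    IntegrableOn (fun s : ℝ => Real.log |1 - s ^ 2| / s ^ 2) (Ioi (Real.sqrt 2)) := by
  refine integrableOn_Ioi_deriv_of_nonneg
    (g := Faux) (g' := fun x => Real.log |1 - x ^ 2| / x ^ 2) (l := 0)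
    ?_ (fun x hx => hasDerivAt_Faux (lt_trans (lt_trans one_pos sqrt_two_gt_one) hx)
      (ne_of_gt (lt_trans sqrt_two_gt_one hx))) (fun x hx => ?_) tendsto_Faux_atTop
  · exact ((hasDerivAt_Faux (lt_trans one_pos sqrt_two_gt_one)
      (ne_of_gt sqrt_two_gt_one)).continuousAt).continuousWithinAt
  · have hx0 : (0:ℝ) ≤ Real.sqrt 2 := Real.sqrt_nonneg 2
    have hxx : 2 < x ^ 2 := by
      have := Real.sq_sqrt (by norm_num : (0:ℝ) ≤ 2)
      nlinarith [hx.out, Real.sqrt_nonneg 2]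
    have h1 : |1 - x ^ 2| = x ^ 2 - 1 := by
      rw [abs_of_nonpos (by nlinarith)]; ring
    have h2 : (0:ℝ) ≤ Real.log |1 - x ^ 2| := by
      rw [h1]; exact Real.log_nonneg (by nlinarith)
    positivity

lemma integrableOn_Ioi1 :
    IntegrableOn (fun s : ℝ => Real.log |1 - s ^ 2| / s ^ 2) (Ioi (1:ℝ)) := by
  rw [← Ioc_union_Ioi_eq_Ioi (le_of_lt sqrt_two_gt_one)]
  exact integrableOn_Ioc1s.union integrableOn_Ioi_sqrt2

theorem log_abs_one_sub_sq_integral_zero :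
    ∫ s in Set.Ioi (0:ℝ), Real.log |1 - s^2| / s^2 = 0 := by
  have hsplit : Ioc (0:ℝ) 1 ∪ Ioi (1:ℝ) = Ioi (0:ℝ) := Ioc_union_Ioi_eq_Ioi zero_le_one
  have hInt1 : ∫ s in Ioc (0:ℝ) 1, Real.log |1 - s ^ 2| / s ^ 2 = -(2 * Real.log 2) := by
    rw [← intervalIntegral.integral_of_le zero_le_one]
    rw [intervalIntegral.integral_eq_sub_of_hasDerivAt_of_le zero_le_one continuousOn_Faux_Icc01
      (fun x hx => hasDerivAt_Faux hx.1 (ne_of_lt hx.2))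
      ((intervalIntegrable_iff_integrableOn_Ioc_of_le zero_le_one).mpr integrableOn_Ioc01)]
    rw [Faux_one, Faux_zero]
    ring
  have hInt2 : ∫ s in Ioi (1:ℝ), Real.log |1 - s ^ 2| / s ^ 2 = 2 * Real.log 2 := by
    rw [integral_Ioi_of_hasDerivAt_of_tendsto continuousAt_Faux_one.continuousWithinAt
      (fun x hx => hasDerivAt_Faux (lt_trans one_pos hx) (ne_of_gt hx))
      integrableOn_Ioi1 tendsto_Faux_atTop]
    rw [Faux_one]
    ring
  rw [← hsplit, setIntegral_union (Ioc_disjoint_Ioi le_rfl) measurableSet_Ioi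
    integrableOn_Ioc01 integrableOn_Ioi1, hInt1, hInt2]
  ring
end

section
/- If w₁ and w₂ are complex numbers with Re w₁ = Re w₂ and |Im w₁| ≤ Im w₂, then for every complex z with Im z ≥ 0, one has |1 - z·w₁| ≤ |1 - z·w₂|. -/
/-! Writing `z = x + iy` and `wⱼ = a + ibⱼ`, one has
`|1 - z w₂|² - |1 - z w₁|² = (b₂ - b₁) (2y + |z|² (b₂ + b₁))`,
and `|b₁| ≤ b₂` makes both factors nonnegative once `y ≥ 0`. -/

namespace Complex

theorem normSq_one_sub_mul_sub_normSq_one_sub_mul {w₁ w₂ : ℂ} (hre : w₁.re = w₂.re) (z : ℂ) :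
    normSq (1 - z * w₂) - normSq (1 - z * w₁) =
      (w₂.im - w₁.im) * (2 * z.im + normSq z * (w₂.im + w₁.im)) := by
  simp only [normSq_apply, sub_re, sub_im, one_re, one_im, mul_re, mul_im, hre]
  ring

end Complex

theorem scalar_livsic (w₁ w₂ : ℂ) (hre : w₁.re = w₂.re)
    (him : |w₁.im| ≤ w₂.im) (z : ℂ) (hz : 0 ≤ z.im) :
    ‖1 - z * w₁‖ ≤ ‖1 - z * w₂‖ := by
  obtain ⟨hlow, hup⟩ := abs_le.mp him
  have hgap : 0 ≤ (w₂.im - w₁.im) * (2 * z.im + Complex.normSq z * (w₂.im + w₁.im)) :=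
    mul_nonneg (by linarith)
      (add_nonneg (by positivity) (mul_nonneg (Complex.normSq_nonneg z) (by linarith)))
  rw [← sq_le_sq₀ (norm_nonneg _) (norm_nonneg _), Complex.sq_norm, Complex.sq_norm]
  linarith [Complex.normSq_one_sub_mul_sub_normSq_one_sub_mul hre z]
end

section
/- For 1 < p < 2 there exists a constant K_p > 0 such that for all φ with |φ| ≤ π/2, cos(p·φ) ≤ K_p · (cos φ)^p. -/
/-!
With `a = π / (2p) < π / 2`, take `K = (cos a)⁻ᵖ`. If `|φ| ≤ a` then `cos φ ≥ cos a`, so the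
right-hand side is at least `1 ≥ cos (pφ)`. Otherwise `π/2 < p|φ| ≤ pπ/2 < π`, so
`cos (pφ) ≤ 0`.
-/

open Real

lemma cos_le_cos_of_abs_le {x a : ℝ} (hx : |x| ≤ a) (ha : a ≤ π) : cos a ≤ cos x := by
  rw [← cos_abs x]
  exact cos_le_cos_of_nonneg_of_le_pi (abs_nonneg x) ha hx

lemma cos_nonpos_of_pi_div_two_le_abs {x : ℝ} (h₁ : π / 2 ≤ |x|) (h₂ : |x| ≤ π + π / 2) :
    cos x ≤ 0 := by
  rw [← cos_abs x]
  exact cos_nonpos_of_pi_div_two_le_of_le h₁ h₂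

theorem cos_p_mul_le (p : ℝ) (hp1 : 1 < p) (hp2 : p < 2) :
    ∃ K : ℝ, 0 < K ∧ ∀ φ : ℝ, |φ| ≤ π / 2 →
      Real.cos (p * φ) ≤ K * (Real.cos φ) ^ p := by
  have hp0 : 0 < p := by linarith
  set a := π / (2 * p) with ha_def
  have hpa : p * a = π / 2 := by rw [ha_def]; field_simp
  have ha : a < π / 2 := div_lt_div_of_pos_left pi_pos (by positivity) (by linarith)
  have hc : 0 < cos a := cos_pos_of_mem_Ioo ⟨by linarith [show 0 < a by positivity], ha⟩
  refine ⟨(cos a ^ p)⁻¹, by positivity, fun φ hφ => ?_⟩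
  have hcosφ : 0 ≤ cos φ := cos_nonneg_of_mem_Icc (abs_le.mp hφ)
  rcases le_or_gt |φ| a with hsmall | hlarge
  · calc cos (p * φ) ≤ 1 := cos_le_one _
      _ ≤ (cos a ^ p)⁻¹ * cos φ ^ p := by
        rw [inv_mul_eq_div, one_le_div (by positivity)]
        exact rpow_le_rpow hc.le (cos_le_cos_of_abs_le hsmall (by linarith [pi_pos])) hp0.le
  · have hneg : cos (p * φ) ≤ 0 := by
      apply cos_nonpos_of_pi_div_two_le_abs <;> rw [abs_mul, abs_of_pos hp0]
      · rw [← hpa]; gcongr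
      · nlinarith [abs_nonneg φ, pi_pos]
    exact hneg.trans (by positivity)
end

section
/- For 1 < p < 2, 0 ≤ θ ≤ π, ρ > 0, and ε > 0, one has ∫₀^∞ (log|1 - s·e^{-2iθ}| / s^{p/2+1}) · e^{-ε s ρ²} ds ≤ e^{-2ε ρ² (cos 2θ)⁺} · ∫₀^∞ log|1 - s·e^{-2iθ}| / s^{p/2+1} ds, where (x)⁺ = max(x,0). -/
open MeasureTheory Real Complex Set

/-!
Write `z = e^{-2iθ}`, so that `‖1 - s z‖² = 1 - 2 s Re z + s²`. Hence `log ‖1 - s z‖` is `≤ 0`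
for `0 < s ≤ c := 2 (Re z)⁺` and `≥ 0` for `s ≥ c`, while the weight `w(s) = e^{-ε s ρ²}` is
decreasing. Thus `f(s) w(s) ≤ w(c) f(s)` pointwise for `f(s) = log ‖1 - s z‖ / s^{p/2+1}`, and
integrating gives the claim. The integrals exist because `f(s) = O(s^{-p/2})` at `0`,
`f(s) = O(s^{-p/2-1} log s)` at `∞`, and `log ‖1 - s z‖` has at worst an integrable logarithmic
singularity at `s = 1`.
-/

section SignChange

variable {α : Type*} [LinearOrder α]

theorem mul_le_mul_of_sign_change {f w : α → ℝ} {c s : α} (hw : Antitone w)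
    (hneg : s ≤ c → f s ≤ 0) (hpos : c ≤ s → 0 ≤ f s) : f s * w s ≤ w c * f s := by
  rw [mul_comm (w c)]
  rcases le_total s c with hsc | hcs
  · exact mul_le_mul_of_nonpos_left (hw hsc) (hneg hsc)
  · exact mul_le_mul_of_nonneg_left (hw hcs) (hpos hcs)

theorem setIntegral_mul_le_of_sign_change [MeasurableSpace α] {μ : Measure α} {S : Set α}
    (hS : MeasurableSet S) {f w : α → ℝ} {c : α} (hw : Antitone w) (hf : IntegrableOn f S μ)
    (hfw : IntegrableOn (fun s => f s * w s) S μ) (hneg : ∀ s ∈ S, s ≤ c → f s ≤ 0)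
    (hpos : ∀ s ∈ S, c ≤ s → 0 ≤ f s) :
    ∫ s in S, f s * w s ∂μ ≤ w c * ∫ s in S, f s ∂μ := by
  rw [← integral_const_mul]
  exact setIntegral_mono_on hfw (hf.const_mul _) hS fun s hs =>
    mul_le_mul_of_sign_change hw (hneg s hs) (hpos s hs)

end SignChange

theorem MeasureTheory.IntegrableOn.mul_antitone_Ioi {f w : ℝ → ℝ} {a : ℝ}
    (hf : IntegrableOn f (Ioi a)) (hw : Antitone w) (hw0 : ∀ s, 0 ≤ w s) :
    IntegrableOn (fun s => f s * w s) (Ioi a) := by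
  refine hf.mul_bdd hw.measurable.aestronglyMeasurable (c := w a) ?_
  filter_upwards [ae_restrict_mem measurableSet_Ioi] with s hs
  rw [Real.norm_of_nonneg (hw0 s)]
  exact hw (le_of_lt hs)

section UnitCircle

variable {z : ℂ}

theorem norm_one_sub_ofReal_mul_sq (hz : ‖z‖ = 1) (s : ℝ) :
    ‖1 - (s : ℂ) * z‖ ^ 2 = 1 - 2 * s * z.re + s ^ 2 := by
  have hnormSq : z.re * z.re + z.im * z.im = 1 := by
    rw [← Complex.normSq_apply, Complex.normSq_eq_norm_sq, hz, one_pow]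
  rw [Complex.sq_norm, Complex.normSq_apply]
  simp only [sub_re, sub_im, one_re, one_im, mul_re, mul_im, ofReal_re, ofReal_im]
  linear_combination s ^ 2 * hnormSq

theorem log_norm_one_sub_ofReal_mul_nonpos (hz : ‖z‖ = 1) {s : ℝ} (hs : 0 ≤ s)
    (hsc : s ≤ 2 * max z.re 0) : Real.log ‖1 - (s : ℂ) * z‖ ≤ 0 := by
  have hsq := norm_one_sub_ofReal_mul_sq hz s
  have hle : s ^ 2 ≤ 2 * s * z.re := by
    rcases max_cases z.re 0 with ⟨hmax, _⟩ | ⟨hmax, _⟩ <;> rw [hmax] at hsc <;> nlinarith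
  refine Real.log_nonpos (norm_nonneg _) ?_
  nlinarith [norm_nonneg (1 - (s : ℂ) * z)]

theorem log_norm_one_sub_ofReal_mul_nonneg (hz : ‖z‖ = 1) {s : ℝ}
    (hsc : 2 * max z.re 0 ≤ s) : 0 ≤ Real.log ‖1 - (s : ℂ) * z‖ := by
  have hsq := norm_one_sub_ofReal_mul_sq hz s
  have hs : 0 ≤ s := le_trans (by positivity) hsc
  have hle : 2 * s * z.re ≤ s ^ 2 := by nlinarith [le_max_left z.re 0]
  refine Real.log_nonneg ?_
  nlinarith [norm_nonneg (1 - (s : ℂ) * z)]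

theorem norm_one_sub_ofReal_mul_le (hz : ‖z‖ = 1) {s : ℝ} (hs : 0 ≤ s) :
    ‖1 - (s : ℂ) * z‖ ≤ 1 + s := by
  simpa [hz, abs_of_nonneg hs] using norm_sub_le (1 : ℂ) (s * z)

theorem abs_one_sub_le_norm_one_sub_ofReal_mul (hz : ‖z‖ = 1) {s : ℝ} (hs : 0 ≤ s) :
    |1 - s| ≤ ‖1 - (s : ℂ) * z‖ := by
  simpa [hz, abs_of_nonneg hs] using abs_norm_sub_norm_le (1 : ℂ) (s * z)

theorem abs_log_norm_one_sub_ofReal_mul_le (hz : ‖z‖ = 1) {s : ℝ} (hs0 : 0 ≤ s)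
    (hs : s ≤ 1 / 2) : |Real.log ‖1 - (s : ℂ) * z‖| ≤ 2 * s := by
  have hlow : 1 - s ≤ ‖1 - (s : ℂ) * z‖ := by
    simpa [abs_of_nonneg (by linarith : 0 ≤ 1 - s)] using
      abs_one_sub_le_norm_one_sub_ofReal_mul hz hs0
  have hpos : 0 < 1 - s := by linarith
  rw [abs_le]
  constructor
  · have hinv : (1 - s)⁻¹ ≤ 1 + 2 * s := by
      rw [inv_le_iff_one_le_mul₀ hpos]
      nlinarith
    calc -(2 * s) ≤ 1 - (1 - s)⁻¹ := by linarith
      _ ≤ Real.log (1 - s) := Real.one_sub_inv_le_log_of_pos hpos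
      _ ≤ Real.log ‖1 - (s : ℂ) * z‖ := Real.log_le_log hpos hlow
  · calc Real.log ‖1 - (s : ℂ) * z‖ ≤ Real.log (1 + s) :=
          Real.log_le_log (by linarith) (norm_one_sub_ofReal_mul_le hz hs0)
      _ ≤ s := by linarith [Real.log_le_sub_one_of_pos (by linarith : 0 < 1 + s)]
      _ ≤ 2 * s := by linarith

end UnitCircle

section Integrability

variable {z : ℂ} {r : ℝ}

theorem intervalIntegrable_log_norm_one_sub_ofReal_mul {a b : ℝ} :
    IntervalIntegrable (fun s : ℝ => Real.log ‖1 - (s : ℂ) * z‖) volume a b :=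
  MeromorphicOn.intervalIntegrable_log_norm fun s _ =>
    (analyticAt_const.sub ((ofRealCLM.analyticAt s).mul analyticAt_const)).meromorphicAt

theorem integrableOn_Icc_log_norm_one_sub_ofReal_mul_div_rpow {a b : ℝ}
    (ha : 0 < a) (hab : a ≤ b) :
    IntegrableOn (fun s : ℝ => Real.log ‖1 - (s : ℂ) * z‖ / s ^ r) (Icc a b) := by
  have hlog : IntegrableOn (fun s : ℝ => Real.log ‖1 - (s : ℂ) * z‖) (Icc a b) :=
    (intervalIntegrable_iff_integrableOn_Icc_of_le hab).mp
      intervalIntegrable_log_norm_one_sub_ofReal_mul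
  have hpos : ∀ s ∈ Icc a b, 0 < s := fun s hs => ha.trans_le hs.1
  have hcont : ContinuousOn (fun s : ℝ => (s ^ r)⁻¹) (Icc a b) :=
    (continuousOn_id.rpow_const fun s hs => Or.inl (hpos s hs).ne').inv₀ fun s hs =>
      (Real.rpow_pos_of_pos (hpos s hs) r).ne'
  simpa only [div_eq_mul_inv] using hlog.mul_continuousOn hcont isCompact_Icc

theorem integrableOn_Ioc_zero_log_norm_one_sub_ofReal_mul_div_rpow (hz : ‖z‖ = 1)
    (hr : r < 2) :
    IntegrableOn (fun s : ℝ => Real.log ‖1 - (s : ℂ) * z‖ / s ^ r) (Ioc 0 (1 / 2)) := by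
  have hbound : IntegrableOn (fun s : ℝ => 2 * s ^ (1 - r)) (Ioc 0 (1 / 2)) := by
    have h := intervalIntegral.intervalIntegrable_rpow' (a := 0) (b := 1 / 2)
      (show -1 < 1 - r by linarith)
    exact ((intervalIntegrable_iff_integrableOn_Ioc_of_le (by norm_num)).mp h).const_mul 2
  refine hbound.mono' (Measurable.aestronglyMeasurable (by fun_prop)) ?_
  filter_upwards [ae_restrict_mem measurableSet_Ioc] with s ⟨hs0, hs⟩
  rw [Real.norm_eq_abs, abs_div, abs_of_pos (Real.rpow_pos_of_pos hs0 r), Real.rpow_sub hs0,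
    Real.rpow_one, ← mul_div_assoc]
  gcongr
  exact abs_log_norm_one_sub_ofReal_mul_le hz hs0.le hs

theorem integrableOn_Ioi_two_log_norm_one_sub_ofReal_mul_div_rpow (hz : ‖z‖ = 1)
    (hr : 1 < r) :
    IntegrableOn (fun s : ℝ => Real.log ‖1 - (s : ℂ) * z‖ / s ^ r) (Ioi 2) := by
  obtain ⟨δ, hδ0, hδr⟩ : ∃ δ, 0 < δ ∧ δ - r < -1 := ⟨(r - 1) / 2, by linarith, by linarith⟩
  have hbound : IntegrableOn (fun s : ℝ => 2 / δ * s ^ (δ - r)) (Ioi 2) :=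
    (integrableOn_Ioi_rpow_of_lt hδr (by norm_num)).const_mul _
  refine hbound.mono' (Measurable.aestronglyMeasurable (by fun_prop)) ?_
  filter_upwards [ae_restrict_mem measurableSet_Ioi] with s (hs : 2 < s)
  have hs0 : 0 < s := by linarith
  have hnorm_ge : 1 ≤ ‖1 - (s : ℂ) * z‖ := by
    have := abs_one_sub_le_norm_one_sub_ofReal_mul hz hs0.le
    rw [abs_of_neg (by linarith)] at this
    linarith
  -- `‖1 - s z‖ ≤ 1 + s ≤ s ^ 2` for `s ≥ 2`
  have hlog_le : Real.log ‖1 - (s : ℂ) * z‖ ≤ 2 * Real.log s := by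
    rw [← Real.log_rpow hs0, Real.rpow_two]
    exact Real.log_le_log (by linarith) <|
      (norm_one_sub_ofReal_mul_le hz hs0.le).trans (by nlinarith)
  have hlog_s : Real.log s ≤ s ^ δ / δ := Real.log_le_rpow_div hs0.le hδ0
  have hsr : 0 < s ^ r := Real.rpow_pos_of_pos hs0 r
  calc ‖Real.log ‖1 - (s : ℂ) * z‖ / s ^ r‖ = Real.log ‖1 - (s : ℂ) * z‖ / s ^ r := by
        rw [Real.norm_of_nonneg (div_nonneg (Real.log_nonneg hnorm_ge) hsr.le)]
    _ ≤ 2 / δ * s ^ δ / s ^ r := by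
        gcongr
        calc _ ≤ 2 * (s ^ δ / δ) := by linarith
          _ = 2 / δ * s ^ δ := by ring
    _ = 2 / δ * s ^ (δ - r) := by rw [Real.rpow_sub hs0, mul_div_assoc]

theorem integrableOn_log_norm_one_sub_ofReal_mul_div_rpow (hz : ‖z‖ = 1) (hr1 : 1 < r)
    (hr2 : r < 2) :
    IntegrableOn (fun s : ℝ => Real.log ‖1 - (s : ℂ) * z‖ / s ^ r) (Ioi 0) := by
  rw [← Ioc_union_Ioi_eq_Ioi (by norm_num : (0 : ℝ) ≤ 2),
    ← Ioc_union_Ioc_eq_Ioc (by norm_num : (0 : ℝ) ≤ 1 / 2) (by norm_num : (1 / 2 : ℝ) ≤ 2)]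
  refine ((integrableOn_Ioc_zero_log_norm_one_sub_ofReal_mul_div_rpow hz hr2).union ?_).union
    (integrableOn_Ioi_two_log_norm_one_sub_ofReal_mul_div_rpow hz hr1)
  exact IntegrableOn.mono_set
    (integrableOn_Icc_log_norm_one_sub_ofReal_mul_div_rpow (by norm_num) (by norm_num))
    Ioc_subset_Icc_self

end Integrability

theorem integral_log_abs_one_sub_rot_weighted_general (p θ ρ ε : ℝ) (hp1 : 1 < p) (hp2 : p < 2)
    (hε : 0 < ε) :
    (∫ s in Set.Ioi (0:ℝ),
        (Real.log ‖1 - (s:ℂ) * Complex.exp (-2 * θ * Complex.I)‖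
          / s ^ (p / 2 + 1)) * Real.exp (-ε * s * ρ ^ 2))
      ≤ Real.exp (-2 * ε * ρ ^ 2 * max (Real.cos (2 * θ)) 0) *
        ∫ s in Set.Ioi (0:ℝ),
          Real.log ‖1 - (s:ℂ) * Complex.exp (-2 * θ * Complex.I)‖
            / s ^ (p / 2 + 1) := by
  set z := Complex.exp (-2 * θ * Complex.I)
  have hz : ‖z‖ = 1 := by simp [z, Complex.norm_exp]
  have hre : z.re = Real.cos (2 * θ) := by simp [z, Complex.exp_re]
  have hf := integrableOn_log_norm_one_sub_ofReal_mul_div_rpow hz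
    (r := p / 2 + 1) (by linarith) (by linarith)
  have hw : Antitone fun s : ℝ => Real.exp (-ε * s * ρ ^ 2) := fun s t hst =>
    Real.exp_le_exp.mpr <| by
      nlinarith [mul_nonneg (mul_nonneg hε.le (sq_nonneg ρ)) (sub_nonneg.2 hst)]
  have key := setIntegral_mul_le_of_sign_change measurableSet_Ioi (c := 2 * max z.re 0) hw hf
    (hf.mul_antitone_Ioi hw fun _ => (Real.exp_pos _).le)
    (fun s hs hsc => div_nonpos_of_nonpos_of_nonneg
      (log_norm_one_sub_ofReal_mul_nonpos hz (le_of_lt hs) hsc)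
      (Real.rpow_nonneg (le_of_lt hs) _))
    (fun s hs hsc => div_nonneg (log_norm_one_sub_ofReal_mul_nonneg hz hsc)
      (Real.rpow_nonneg (le_of_lt hs) _))
  convert key using 3
  rw [hre]
  ring

theorem integral_log_abs_one_sub_rot_weighted (p θ ρ ε : ℝ) (hp1 : 1 < p) (hp2 : p < 2)
    (hθ0 : 0 ≤ θ) (hθπ : θ ≤ π) (hρ : 0 < ρ) (hε : 0 < ε) :
    (∫ s in Set.Ioi (0:ℝ),
        (Real.log ‖1 - (s:ℂ) * Complex.exp (-2 * θ * Complex.I)‖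
          / s ^ (p / 2 + 1)) * Real.exp (-ε * s * ρ ^ 2))
      ≤ Real.exp (-2 * ε * ρ ^ 2 * max (Real.cos (2 * θ)) 0) *
        ∫ s in Set.Ioi (0:ℝ),
          Real.log ‖1 - (s:ℂ) * Complex.exp (-2 * θ * Complex.I)‖
            / s ^ (p / 2 + 1) :=
  integral_log_abs_one_sub_rot_weighted_general p θ ρ ε hp1 hp2 hε
end

section
/- Let A be an n×n complex matrix with Hermitian parts G = (A+A*)/2 and H = (A-A*)/(2i), and let C_B(z) denote the Carleman-type determinant ∏_k (1 - z·μ_k(B))·e^{z·μ_k(B)} over the eigenvalues μ_k(B) of B. Then for all z ∈ ℂ with I - zG invertible, det(I + z²·(H·(I - zG)^{-1})²) = C_A(z)·C_{A*}(z) / C_G(z)². -/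
open Matrix

/-- The Carleman-type determinant `C_B(z) = det(I - z B) · exp(z · tr B)`. -/
noncomputable def carlemanDet {n : ℕ} (B : Matrix (Fin n) (Fin n) ℂ) (z : ℂ) : ℂ :=
  (1 - z • B).det * Complex.exp (z * B.trace)

/-!
With `A = G + iH`, one has `I - zA = M - izH` and `I - zA* = M + izH` for `M = I - zG`, so
`I + z²(HM⁻¹)² = (I + iz HM⁻¹)(I - iz HM⁻¹) = (M + izH)M⁻¹ (M - izH)M⁻¹`. Taking determinants
gives the determinant part of the identity, and the exponential factors cancel because
`tr A + tr A* = 2 tr G`.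
-/

open Complex

section CartesianDecomposition

variable {E : Type*} [AddCommGroup E] [Module ℂ E]

lemma eq_half_add_add_I_smul_half_sub (a b : E) :
    a = (2 : ℂ)⁻¹ • (a + b) + I • ((2 * I)⁻¹ • (a - b)) := by
  match_scalars <;> field_simp <;> ring

lemma eq_half_add_sub_I_smul_half_sub (a b : E) :
    b = (2 : ℂ)⁻¹ • (a + b) - I • ((2 * I)⁻¹ • (a - b)) := by
  match_scalars <;> field_simp <;> ring

end CartesianDecomposition

lemma one_add_sq_smul_sq_eq_mul {R : Type*} [Ring R] [Algebra ℂ R] (z : ℂ) (x : R) :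
    1 + z ^ 2 • x ^ 2 = (1 + (I * z) • x) * (1 - (I * z) • x) := by
  rw [← (Commute.one_left _).sq_sub_sq, smul_pow, mul_pow, I_sq, one_pow, neg_one_mul, neg_smul,
    sub_neg_eq_add]

section MatrixDet

variable {n K : Type*} [Fintype n] [DecidableEq n] [Field K]

lemma det_one_add_smul_mul_inv {M : Matrix n n K} (hM : IsUnit M.det) (c : K) (H : Matrix n n K) :
    (1 + c • (H * M⁻¹)).det = (M + c • H).det / M.det := by
  rw [← mul_nonsing_inv M hM, ← smul_mul_assoc, ← add_mul, det_mul, det_nonsing_inv,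
    Ring.inverse_eq_inv', div_eq_mul_inv]

lemma det_one_add_sq_smul_mul_inv_sq {M : Matrix n n ℂ} (hM : IsUnit M.det) (z : ℂ)
    (H : Matrix n n ℂ) :
    (1 + z ^ 2 • (H * M⁻¹) ^ 2).det
      = (M - (I * z) • H).det * (M + (I * z) • H).det / M.det ^ 2 := by
  rw [one_add_sq_smul_sq_eq_mul, det_mul, sub_eq_add_neg, ← neg_smul, det_one_add_smul_mul_inv hM,
    det_one_add_smul_mul_inv hM, neg_smul, ← sub_eq_add_neg]
  ring

end MatrixDet

lemma carlemanDet_mul_div_sq {n : ℕ} {A B G : Matrix (Fin n) (Fin n) ℂ}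
    (htr : A.trace + B.trace = 2 * G.trace) (z : ℂ) :
    carlemanDet A z * carlemanDet B z / carlemanDet G z ^ 2
      = (1 - z • A).det * (1 - z • B).det / (1 - z • G).det ^ 2 := by
  have hexp : exp (z * A.trace) * exp (z * B.trace) = exp (z * G.trace) ^ 2 := by
    rw [← exp_add, ← mul_add, htr, ← exp_nat_mul]
    ring_nf
  rw [carlemanDet, carlemanDet, carlemanDet, mul_mul_mul_comm, hexp, mul_pow,
    mul_div_mul_right _ _ (pow_ne_zero 2 (exp_ne_zero _))]

theorem det_factorization_carleman (n : ℕ) (A : Matrix (Fin n) (Fin n) ℂ)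
    (G H : Matrix (Fin n) (Fin n) ℂ)
    (hG : G = (2:ℂ)⁻¹ • (A + Aᴴ)) (hH : H = (2 * Complex.I)⁻¹ • (A - Aᴴ))
    (z : ℂ) (hz : IsUnit (1 - z • G).det) :
    (1 + (z ^ 2) • (H * (1 - z • G)⁻¹) ^ 2).det
      = carlemanDet A z * carlemanDet Aᴴ z / (carlemanDet G z) ^ 2 := by
  have hA : 1 - z • A = (1 - z • G) - (I * z) • H := by
    conv_lhs => rw [eq_half_add_add_I_smul_half_sub A Aᴴ, ← hG, ← hH]
    rw [smul_add, ← mul_smul, mul_comm z I]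
    abel
  have hAh : 1 - z • Aᴴ = (1 - z • G) + (I * z) • H := by
    conv_lhs => rw [eq_half_add_sub_I_smul_half_sub A Aᴴ, ← hG, ← hH]
    rw [smul_sub, ← mul_smul, mul_comm z I]
    abel
  have htr : A.trace + Aᴴ.trace = 2 * G.trace := by
    rw [hG, trace_smul, trace_add, smul_eq_mul, ← mul_assoc, mul_inv_cancel₀ two_ne_zero, one_mul]
  rw [carlemanDet_mul_div_sq htr, hA, hAh, det_one_add_sq_smul_mul_inv_sq hz]
end

section
/- For z = r·e^{iθ} with 0 < θ < π, R = 2r, and t ∈ (-R, R) with t ≠ 0, the boundary-segment kernel K₂(t, z) = (Im z/π)·(1/|t - z|² - R²/|R² - t z|²) satisfies K₂(t, re^{iθ}) ≤ (48 r/(π sin θ))·(1/t² - 1/R²). -/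
/-!
Since `|R² - t z|² - R² |t - z|² = (R² - t²)(R² - |z|²)`, the kernel equals
`(Im z / π) (R² - t²)(R² - |z|²) / (|t - z|² |R² - t z|²)`. For `z = r e^{iθ}` with `R = 2r`,
the distance from `t` to the line through `z` gives `|t - z| ≥ |t| sin θ`, and `|t z| < R²/2`
gives `|R² - t z| ≥ R²/2`; together they bound the kernel with constant `3` in place of `48`.
-/

open Real

noncomputable def segmentKernel (R t : ℝ) (z : ℂ) : ℝ :=
  z.im / π * (1 / ‖(t : ℂ) - z‖ ^ 2 - R ^ 2 / ‖(R : ℂ) ^ 2 - t * z‖ ^ 2)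

theorem norm_sq_sub_mul_sub_sq_mul_norm_sq (R t : ℝ) (z : ℂ) :
    ‖(R : ℂ) ^ 2 - t * z‖ ^ 2 - R ^ 2 * ‖(t : ℂ) - z‖ ^ 2 = (R ^ 2 - t ^ 2) * (R ^ 2 - ‖z‖ ^ 2) := by
  rw [Complex.sq_norm, Complex.sq_norm, Complex.sq_norm]
  simp only [Complex.normSq_apply, Complex.sub_re, Complex.sub_im, Complex.mul_re,
    Complex.mul_im, Complex.ofReal_re, Complex.ofReal_im, pow_two]
  ring

theorem one_div_norm_sq_sub_sub_div_norm_sq_sub_mul {R t : ℝ} {z : ℂ} (hz : (t : ℂ) ≠ z)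
    (hRz : (R : ℂ) ^ 2 ≠ t * z) :
    1 / ‖(t : ℂ) - z‖ ^ 2 - R ^ 2 / ‖(R : ℂ) ^ 2 - t * z‖ ^ 2
      = (R ^ 2 - t ^ 2) * (R ^ 2 - ‖z‖ ^ 2) / (‖(t : ℂ) - z‖ ^ 2 * ‖(R : ℂ) ^ 2 - t * z‖ ^ 2) := by
  have hA : ‖(t : ℂ) - z‖ ≠ 0 := norm_ne_zero_iff.2 (sub_ne_zero.2 hz)
  have hB : ‖(R : ℂ) ^ 2 - t * z‖ ≠ 0 := norm_ne_zero_iff.2 (sub_ne_zero.2 hRz)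
  rw [← norm_sq_sub_mul_sub_sq_mul_norm_sq]
  field_simp

theorem sq_mul_sin_sq_le_norm_sub_mul_exp_sq (t r θ : ℝ) :
    t ^ 2 * sin θ ^ 2 ≤ ‖(t : ℂ) - r * Complex.exp (θ * Complex.I)‖ ^ 2 := by
  have h : ‖(t : ℂ) - r * Complex.exp (θ * Complex.I)‖ ^ 2 - t ^ 2 * sin θ ^ 2
      = (t * cos θ - r) ^ 2 := by
    rw [Complex.sq_norm, Complex.normSq_apply]
    simp only [Complex.sub_re, Complex.sub_im, Complex.mul_re, Complex.mul_im, Complex.ofReal_re,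
      Complex.ofReal_im, Complex.exp_ofReal_mul_I_re, Complex.exp_ofReal_mul_I_im]
    linear_combination (r ^ 2 - t ^ 2) * sin_sq_add_cos_sq θ
  nlinarith [sq_nonneg (t * cos θ - r)]

theorem sq_div_two_le_norm_sq_sub_mul {R t : ℝ} {z : ℂ} (ht : |t| ≤ R) (hz : ‖z‖ ≤ R / 2) :
    R ^ 2 / 2 ≤ ‖(R : ℂ) ^ 2 - t * z‖ := by
  have htz : ‖(t : ℂ) * z‖ ≤ R * (R / 2) := by
    rw [norm_mul, Complex.norm_real, Real.norm_eq_abs]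
    exact mul_le_mul ht hz (norm_nonneg z) ((abs_nonneg t).trans ht)
  have h := norm_sub_norm_le ((R : ℂ) ^ 2) (t * z)
  rw [norm_pow, Complex.norm_real, Real.norm_eq_abs, sq_abs] at h
  linarith

theorem segmentKernel_polar_le {r θ t : ℝ} (hr : 0 < r) (hsin : 0 < sin θ) (ht : |t| < 2 * r)
    (ht0 : t ≠ 0) :
    segmentKernel (2 * r) t (r * Complex.exp (θ * Complex.I))
      ≤ 3 * r / (π * sin θ) * (1 / t ^ 2 - 1 / (2 * r) ^ 2) := by
  set z := (r : ℂ) * Complex.exp (θ * Complex.I)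
  have hz : ‖z‖ = r := by
    rw [norm_mul, Complex.norm_exp_ofReal_mul_I, Complex.norm_real, Real.norm_of_nonneg hr.le,
      mul_one]
  have him : z.im = r * sin θ := by
    simp only [z, Complex.mul_im, Complex.ofReal_re, Complex.ofReal_im, Complex.exp_ofReal_mul_I_re,
      Complex.exp_ofReal_mul_I_im, zero_mul, add_zero]
  have hA : t ^ 2 * sin θ ^ 2 ≤ ‖(t : ℂ) - z‖ ^ 2 := sq_mul_sin_sq_le_norm_sub_mul_exp_sq t r θ
  have hA0 : 0 < t ^ 2 * sin θ ^ 2 := by positivity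
  have hB : (2 * r) ^ 2 / 2 ≤ ‖((2 * r : ℝ) : ℂ) ^ 2 - t * z‖ :=
    sq_div_two_le_norm_sq_sub_mul ht.le (by rw [hz]; linarith)
  have hAB : t ^ 2 * sin θ ^ 2 * ((2 * r) ^ 2 / 2) ^ 2
      ≤ ‖(t : ℂ) - z‖ ^ 2 * ‖((2 * r : ℝ) : ℂ) ^ 2 - t * z‖ ^ 2 := by
    gcongr
  have hRt : 0 ≤ (2 * r) ^ 2 - t ^ 2 :=
    sub_nonneg.2 (sq_le_sq' (abs_le.1 ht.le).1 (abs_le.1 ht.le).2)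
  have htz : (t : ℂ) ≠ z := fun h => by
    rw [h, sub_self, norm_zero] at hA
    linarith
  have hRtz : ((2 * r : ℝ) : ℂ) ^ 2 ≠ t * z := fun h => by
    rw [h, sub_self, norm_zero] at hB
    nlinarith
  rw [segmentKernel, one_div_norm_sq_sub_sub_div_norm_sq_sub_mul htz hRtz, him, hz]
  calc r * sin θ / π * (((2 * r) ^ 2 - t ^ 2) * ((2 * r) ^ 2 - r ^ 2)
        / (‖(t : ℂ) - z‖ ^ 2 * ‖((2 * r : ℝ) : ℂ) ^ 2 - t * z‖ ^ 2))
      ≤ r * sin θ / π * (((2 * r) ^ 2 - t ^ 2) * ((2 * r) ^ 2 - r ^ 2)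
        / (t ^ 2 * sin θ ^ 2 * ((2 * r) ^ 2 / 2) ^ 2)) := by
        gcongr
        nlinarith
    _ = 3 * r / (π * sin θ) * (1 / t ^ 2 - 1 / (2 * r) ^ 2) := by
        field_simp
        ring

theorem halfdisk_segment_kernel_bound (r θ t : ℝ) (hr : 0 < r)
    (hθ : θ ∈ Set.Ioo 0 π) (ht : t ∈ Set.Ioo (-(2 * r)) (2 * r)) (ht0 : t ≠ 0) :
    ((r * Complex.exp (θ * Complex.I)).im / π) *
        (1 / ‖(t : ℂ) - r * Complex.exp (θ * Complex.I)‖ ^ 2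
          - (2 * r) ^ 2 / ‖((2 * r : ℝ) ^ 2 : ℂ)
              - t * (r * Complex.exp (θ * Complex.I))‖ ^ 2)
      ≤ 48 * r / (π * Real.sin θ) * (1 / t ^ 2 - 1 / (2 * r) ^ 2) := by
  have hsin : 0 < sin θ := sin_pos_of_pos_of_lt_pi hθ.1 hθ.2
  have htr : |t| < 2 * r := abs_lt.2 ht
  have hgap : 0 ≤ 1 / t ^ 2 - 1 / (2 * r) ^ 2 := by
    rw [sub_nonneg]
    exact one_div_le_one_div_of_le (by positivity) (sq_le_sq' ht.1.le ht.2.le)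
  calc segmentKernel (2 * r) t (r * Complex.exp (θ * Complex.I))
      ≤ 3 * r / (π * sin θ) * (1 / t ^ 2 - 1 / (2 * r) ^ 2) :=
        segmentKernel_polar_le hr hsin htr ht0
    _ ≤ 48 * r / (π * sin θ) * (1 / t ^ 2 - 1 / (2 * r) ^ 2) := by
        gcongr
        norm_num
end
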